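/- arXiv:2304.06231 — 4 statements merged into one kernel-verified Lean document; each statement's English description precedes it below -/
import Mathlib

section
/- The exact unconditional mean squared error of a subsample mean about the population mean is E[(μ̂^{(k)} − μ)²] = σ² (1/n + 1/N − 1/(nN)), where μ = E(X_1) and σ² = var(X_1), provided E(X_1²) < ∞. -/
open MeasureTheory ProbabilityTheory Filter
open scoped ENNReal NNReal

/-- The `k`-th subsample mean: `μ̂⁽ᵏ⁾ = n⁻¹ ∑ₘ X_{i_m^{(k)}}`. -/
noncomputable def subMean {Ω : Type*} {N n : ℕ} (X : Fin N → Ω → ℝ)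
    (idxk : Fin n → Ω → Fin N) (ω : Ω) : ℝ :=
  (n : ℝ)⁻¹ * ∑ m, X (idxk m ω) ω

/-- The leave-one-out subsample mean `μ̂⁽ᵏ⁾₋ₘ = (n-1)⁻¹ ∑_{m' ≠ m} X_{i_{m'}^{(k)}}`. -/
noncomputable def looMean {Ω : Type*} {N n : ℕ} (X : Fin N → Ω → ℝ)
    (idxk : Fin n → Ω → Fin N) (m : Fin n) (ω : Ω) : ℝ :=
  ((n : ℝ) - 1)⁻¹ * ∑ m' ∈ Finset.univ.erase m, X (idxk m' ω) ω

/-- The whole-sample mean `X̄ = N⁻¹ ∑ᵢ Xᵢ`. -/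
noncomputable def wsMean {Ω : Type*} {N : ℕ} (X : Fin N → Ω → ℝ) (ω : Ω) : ℝ :=
  (N : ℝ)⁻¹ * ∑ i, X i ω

/-- The whole-sample variance `σ̂² = N⁻¹ ∑ᵢ (Xᵢ - X̄)²`. -/
noncomputable def wsVar {Ω : Type*} {N : ℕ} (X : Fin N → Ω → ℝ) (ω : Ω) : ℝ :=
  (N : ℝ)⁻¹ * ∑ i, (X i ω - wsMean X ω) ^ 2

/-!
Write `Yₘ = X_{iₘ} - μ` for the centred draws of the `k`-th subsample. Since the indices are
independent of the data, conditioning on them gives `E[Yₘ Yₘ'] = ∑_{i,j} P(iₘ = i, iₘ' = j) ·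
E[(Xᵢ - μ)(Xⱼ - μ)]`, and the i.i.d. assumption kills the off-diagonal terms, leaving
`E[Yₘ Yₘ'] = σ² P(iₘ = iₘ')`. This collision probability is `1` for `m = m'` and `1/N` otherwise,
so `E[(μ̂⁽ᵏ⁾ - μ)²] = n⁻² (n σ² + n (n - 1) σ² / N)`.
-/

lemma integral_sub_mul_sub_of_pairwise_indepFun {Ω ι : Type*} [MeasurableSpace Ω] {P : Measure Ω}
    [DecidableEq ι] {X : ι → Ω → ℝ} {μ σ2 : ℝ}
    (hX : ∀ i, MemLp (X i) 2 P) (hindep : Pairwise fun i j => IndepFun (X i) (X j) P)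
    (hmean : ∀ i, P[X i] = μ) (hvar : ∀ i, Var[X i; P] = σ2) (i j : ι) :
    ∫ ω, (X i ω - μ) * (X j ω - μ) ∂P = if i = j then σ2 else 0 := by
  have hcov : ∫ ω, (X i ω - μ) * (X j ω - μ) ∂P = cov[X i, X j; P] := by
    rw [covariance, hmean, hmean]
  split_ifs with hij
  · rw [hcov, hij, covariance_self (hX j).aemeasurable, hvar]
  · rw [hcov, (hindep hij).covariance_eq_zero (hX i) (hX j)]

lemma Set.iUnion_preimage_singleton {Ω α : Type*} (f : Ω → α) : ⋃ a, f ⁻¹' {a} = Set.univ := by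
  ext ω; simp

lemma eqOn_comp_index {Ω α : Type*} {I : Ω → α} (G : α → Ω → ℝ) (a : α) :
    Set.EqOn (fun ω => G (I ω) ω) (G a) (I ⁻¹' {a}) := by
  intro ω hω
  rw [Set.mem_preimage, Set.mem_singleton_iff] at hω
  simp only [hω]

section RandomIndex

variable {Ω α : Type*} [MeasurableSpace Ω] {P : Measure Ω}
  [Fintype α] [MeasurableSpace α] [MeasurableSingletonClass α] {I : Ω → α}

lemma integrable_comp_index (hI : Measurable I) {G : α → Ω → ℝ}
    (hG : ∀ a, Integrable (G a) P) : Integrable (fun ω => G (I ω) ω) P := by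
  rw [← integrableOn_univ, ← Set.iUnion_preimage_singleton I, integrableOn_finite_iUnion]
  exact fun a => (hG a).integrableOn.congr_fun (eqOn_comp_index G a).symm
    (hI (measurableSet_singleton a))

lemma integral_comp_index_of_indepFun {β : Type*} [MeasurableSpace β] {V : Ω → β}
    (hI : Measurable I) (hV : AEMeasurable V P) (hIV : IndepFun I V P)
    {F : α → β → ℝ} (hF : ∀ a, Measurable (F a))
    (hFV : ∀ a, Integrable (fun ω => F a (V ω)) P) :
    ∫ ω, F (I ω) (V ω) ∂P = ∑ a, P.real (I ⁻¹' {a}) * ∫ ω, F a (V ω) ∂P := by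
  have hfiber : ∀ a, MeasurableSet (I ⁻¹' {a}) := fun a => hI (measurableSet_singleton a)
  have hon_fiber := eqOn_comp_index (I := I) fun a ω => F a (V ω)
  rw [← setIntegral_univ, ← Set.iUnion_preimage_singleton I,
    integral_iUnion_fintype hfiber (fun a b hab => Set.disjoint_singleton.2 hab |>.preimage I)
      fun a => (hFV a).integrableOn.congr_fun (hon_fiber a).symm (hfiber a)]
  refine Finset.sum_congr rfl fun a _ => ?_
  rw [setIntegral_congr_fun (hfiber a) (hon_fiber a)]
  exact ((IndepFun_iff_Indep I V P).1 hIV).setIntegral_eq_mul hI.comap_le hV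
    ⟨{a}, measurableSet_singleton a, rfl⟩ (hF a).aestronglyMeasurable

lemma measureReal_setOf_eq_eq_sum_inter [IsFiniteMeasure P] {J : Ω → α}
    (hI : Measurable I) (hJ : Measurable J) :
    P.real {ω | I ω = J ω} = ∑ a, P.real (I ⁻¹' {a} ∩ J ⁻¹' {a}) := by
  have hunion : {ω | I ω = J ω} = ⋃ a, I ⁻¹' {a} ∩ J ⁻¹' {a} := by ext ω; simp [eq_comm]
  rw [hunion, measureReal_iUnion_fintype
    (fun a b hab => ((Set.disjoint_singleton.2 hab).preimage I).mono Set.inter_subset_left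
      Set.inter_subset_left)
    fun a => (hI (measurableSet_singleton a)).inter (hJ (measurableSet_singleton a))]

lemma integral_sub_mul_sub_comp_indices [IsFiniteMeasure P] [DecidableEq α]
    {X : α → Ω → ℝ} {μ σ2 : ℝ}
    (hX : ∀ a, MemLp (X a) 2 P) (hindep : Pairwise fun a b => IndepFun (X a) (X b) P)
    (hmean : ∀ a, P[X a] = μ) (hvar : ∀ a, Var[X a; P] = σ2)
    {J : Ω → α} (hI : Measurable I) (hJ : Measurable J)
    (hIJX : IndepFun (fun ω => (I ω, J ω)) (fun ω a => X a ω) P) :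
    ∫ ω, (X (I ω) ω - μ) * (X (J ω) ω - μ) ∂P = σ2 * P.real {ω | I ω = J ω} := by
  have hXc : ∀ a, MemLp (fun ω => X a ω - μ) 2 P := fun a => (hX a).sub (memLp_const μ)
  rw [integral_comp_index_of_indepFun (F := fun p v => (v p.1 - μ) * (v p.2 - μ))
    (hI.prodMk hJ) (aemeasurable_pi_lambda _ fun a => (hX a).aemeasurable) hIJX
    (fun p => by fun_prop) (fun p => (hXc p.1).integrable_mul (hXc p.2))]
  simp only [integral_sub_mul_sub_of_pairwise_indepFun hX hindep hmean hvar,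
    Fintype.sum_prod_type, mul_ite, mul_zero, Finset.sum_ite_eq, Finset.mem_univ, if_true,
    measureReal_setOf_eq_eq_sum_inter hI hJ, Finset.mul_sum, ← Set.singleton_prod_singleton,
    Set.mk_preimage_prod]
  exact Finset.sum_congr rfl fun a _ => mul_comm _ _

lemma integrable_sub_mul_sub_comp_indices [IsFiniteMeasure P] {X : α → Ω → ℝ}
    (hX : ∀ a, MemLp (X a) 2 P) (μ : ℝ)
    {J : Ω → α} (hI : Measurable I) (hJ : Measurable J) :
    Integrable (fun ω => (X (I ω) ω - μ) * (X (J ω) ω - μ)) P :=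
  integrable_comp_index (G := fun p ω => (X p.1 ω - μ) * (X p.2 ω - μ)) (hI.prodMk hJ) fun p =>
    ((hX p.1).sub (memLp_const μ)).integrable_mul ((hX p.2).sub (memLp_const μ))

lemma measureReal_setOf_eq_of_indepFun_of_uniform [IsProbabilityMeasure P] {J : Ω → α}
    (hI : Measurable I) (hJ : Measurable J) (hIJ : IndepFun I J P)
    (hunif : ∀ a, P (I ⁻¹' {a}) = (Fintype.card α : ℝ≥0∞)⁻¹) :
    P.real {ω | I ω = J ω} = (Fintype.card α : ℝ)⁻¹ := by
  have hfiber : ∀ a, P.real (I ⁻¹' {a} ∩ J ⁻¹' {a})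
      = (Fintype.card α : ℝ)⁻¹ * P.real (J ⁻¹' {a}) := fun a => by
    rw [measureReal_def, hIJ.measure_inter_preimage_eq_mul _ _ (measurableSet_singleton a)
      (measurableSet_singleton a), hunif, ENNReal.toReal_mul, ENNReal.toReal_inv,
      ENNReal.toReal_natCast, measureReal_def]
  rw [measureReal_setOf_eq_eq_sum_inter hI hJ, Finset.sum_congr rfl fun a _ => hfiber a,
    ← Finset.mul_sum,
    sum_measureReal_preimage_singleton _ fun a _ => hJ (measurableSet_singleton a),
    Finset.coe_univ, Set.preimage_univ, probReal_univ, mul_one]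

end RandomIndex

lemma subMean_sub_eq {Ω : Type*} {N n : ℕ} (hn : (n : ℝ) ≠ 0) (X : Fin N → Ω → ℝ)
    (idxk : Fin n → Ω → Fin N) (μ : ℝ) (ω : Ω) :
    subMean X idxk ω - μ = (n : ℝ)⁻¹ * ∑ m, (X (idxk m ω) ω - μ) := by
  rw [subMean, Finset.sum_sub_distrib, Finset.sum_const, Finset.card_univ, Fintype.card_fin,
    nsmul_eq_mul]
  field_simp

lemma integral_sq_sum {Ω ι : Type*} [MeasurableSpace Ω] {P : Measure Ω} (s : Finset ι)
    {Y : ι → Ω → ℝ} (hY : ∀ i j, Integrable (fun ω => Y i ω * Y j ω) P) :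
    ∫ ω, (∑ i ∈ s, Y i ω) ^ 2 ∂P = ∑ i ∈ s, ∑ j ∈ s, ∫ ω, Y i ω * Y j ω ∂P := by
  simp_rw [sq, Finset.sum_mul_sum]
  rw [integral_finsetSum _ fun i _ => integrable_finsetSum _ fun j _ => hY i j]
  exact Finset.sum_congr rfl fun i _ => integral_finsetSum _ fun j _ => hY i j

lemma Finset.sum_sum_ite_eq {ι R : Type*} [Fintype ι] [DecidableEq ι] [CommRing R] (a b : R) :
    ∑ i : ι, ∑ j : ι, (if i = j then a else b)
      = Fintype.card ι * (a - b) + Fintype.card ι ^ 2 * b := by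
  have hsplit : ∀ i j : ι, (if i = j then a else b) = (if i = j then a - b else 0) + b :=
    fun i j => by split_ifs <;> ring
  simp only [hsplit, Finset.sum_add_distrib, Finset.sum_ite_eq, Finset.mem_univ, if_true,
    Finset.sum_const, Finset.card_univ, nsmul_eq_mul]
  ring

theorem subsample_mean_mse_general
    {Ω : Type*} [MeasurableSpace Ω] (P : Measure Ω) [IsProbabilityMeasure P]
    {N n K : ℕ} (hN : 0 < N) (hn : 2 ≤ n)
    (X : Fin N → Ω → ℝ) (idx : Fin K → Fin n → Ω → Fin N)
    -- the Xᵢ are i.i.d. real random variables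
    (hXindep : iIndepFun X P)
    (hXident : ∀ i j, IdentDistrib (X i) (X j) P P)
    -- the sampling indices are measurable, mutually independent,
    -- independent of (X₁, …, X_N), and uniformly distributed on {1, …, N}
    (hidxmeas : ∀ k m, Measurable (idx k m))
    (hidxindep : iIndepFun
      (fun p : Fin K × Fin n => idx p.1 p.2) P)
    (hidxX : IndepFun (fun ω (p : Fin K × Fin n) => idx p.1 p.2 ω)
      (fun ω (i : Fin N) => X i ω) P)
    (hunif : ∀ k m (j : Fin N), P (idx k m ⁻¹' {j}) = (N : ℝ≥0∞)⁻¹)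
    -- E(X₁²) < ∞
    (hL2 : MemLp (X ⟨0, hN⟩) 2 P)
    (μ : ℝ) (hμ : μ = ∫ ω, X ⟨0, hN⟩ ω ∂P)
    (σ2 : ℝ) (hσ2 : σ2 = variance (X ⟨0, hN⟩) P)
    (k : Fin K) :
    ∫ ω, (subMean X (idx k) ω - μ) ^ 2 ∂P
      = σ2 * (1 / (n : ℝ) + 1 / (N : ℝ) - 1 / ((n : ℝ) * (N : ℝ))) := by
  have hn0 : (n : ℝ) ≠ 0 := Nat.cast_ne_zero.2 (by omega)
  have hXL2 : ∀ i, MemLp (X i) 2 P := fun i => (hXident ⟨0, hN⟩ i).memLp_snd hL2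
  have hXmean : ∀ i, P[X i] = μ := fun i => hμ ▸ (hXident ⟨0, hN⟩ i).integral_eq.symm
  have hXvar : ∀ i, Var[X i; P] = σ2 := fun i => hσ2 ▸ (hXident ⟨0, hN⟩ i).variance_eq.symm
  have hcollision : ∀ m m', P.real {ω | idx k m ω = idx k m' ω}
      = if m = m' then 1 else (N : ℝ)⁻¹ := by
    intro m m'
    split_ifs with h
    · simp [h]
    · simpa using measureReal_setOf_eq_of_indepFun_of_uniform (hidxmeas k m) (hidxmeas k m')
        (hidxindep.indepFun (i := (k, m)) (j := (k, m')) (by simpa using h))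
        (by simpa using hunif k m)
  have hcross : ∀ m m', ∫ ω, (X (idx k m ω) ω - μ) * (X (idx k m' ω) ω - μ) ∂P
      = σ2 * if m = m' then 1 else (N : ℝ)⁻¹ := fun m m' => by
    rw [← hcollision]
    exact integral_sub_mul_sub_comp_indices hXL2 (fun i j h => hXindep.indepFun h) hXmean hXvar
      (hidxmeas k m) (hidxmeas k m')
      (hidxX.comp (φ := fun v => (v (k, m), v (k, m'))) (ψ := id) (by fun_prop) measurable_id)
  calc ∫ ω, (subMean X (idx k) ω - μ) ^ 2 ∂P
      = ∫ ω, (n : ℝ)⁻¹ ^ 2 * (∑ m, (X (idx k m ω) ω - μ)) ^ 2 ∂P := by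
        simp_rw [subMean_sub_eq hn0, mul_pow]
    _ = (n : ℝ)⁻¹ ^ 2 * ∑ m : Fin n, ∑ m' : Fin n, σ2 * if m = m' then 1 else (N : ℝ)⁻¹ := by
        rw [integral_const_mul, integral_sq_sum _ fun m m' =>
          integrable_sub_mul_sub_comp_indices hXL2 μ (hidxmeas k m) (hidxmeas k m')]
        simp only [hcross]
    _ = σ2 * (1 / (n : ℝ) + 1 / (N : ℝ) - 1 / ((n : ℝ) * (N : ℝ))) := by
        simp_rw [← Finset.mul_sum]
        rw [Finset.sum_sum_ite_eq, Fintype.card_fin]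
        field_simp
        ring

/-- the exact unconditional mean squared error of a subsample mean about
the population mean is `E[(μ̂⁽ᵏ⁾ − μ)²] = σ² (1/n + 1/N − 1/(nN))`. -/
theorem subsample_mean_mse
    {Ω : Type*} [MeasurableSpace Ω] (P : Measure Ω) [IsProbabilityMeasure P]
    {N n K : ℕ} (hN : 0 < N) (hn : 2 ≤ n) (hK : 0 < K)
    (X : Fin N → Ω → ℝ) (idx : Fin K → Fin n → Ω → Fin N)
    -- the Xᵢ are i.i.d. real random variables
    (hXmeas : ∀ i, Measurable (X i))
    (hXindep : iIndepFun X P)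
    (hXident : ∀ i j, IdentDistrib (X i) (X j) P P)
    -- the sampling indices are measurable, mutually independent,
    -- independent of (X₁, …, X_N), and uniformly distributed on {1, …, N}
    (hidxmeas : ∀ k m, Measurable (idx k m))
    (hidxindep : iIndepFun
      (fun p : Fin K × Fin n => idx p.1 p.2) P)
    (hidxX : IndepFun (fun ω (p : Fin K × Fin n) => idx p.1 p.2 ω)
      (fun ω (i : Fin N) => X i ω) P)
    (hunif : ∀ k m (j : Fin N), P (idx k m ⁻¹' {j}) = (N : ℝ≥0∞)⁻¹)
    -- E(X₁²) < ∞
    (hL2 : MemLp (X ⟨0, hN⟩) 2 P)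
    (μ : ℝ) (hμ : μ = ∫ ω, X ⟨0, hN⟩ ω ∂P)
    (σ2 : ℝ) (hσ2 : σ2 = variance (X ⟨0, hN⟩) P)
    (k : Fin K) :
    ∫ ω, (subMean X (idx k) ω - μ) ^ 2 ∂P
      = σ2 * (1 / (n : ℝ) + 1 / (N : ℝ) - 1 / ((n : ℝ) * (N : ℝ))) :=
  subsample_mean_mse_general P hN hn X idx hXindep hXident hidxmeas hidxindep hidxX hunif hL2 μ hμ
    σ2 hσ2 k
end

section
/- The exact variance of the average of K independent subsample means is Var(K^{-1} Σ_{k=1}^K μ̂^{(k)}) = σ² (1/(nK) + 1/N − 1/(nNK)), where σ² = var(X_1), provided E(X_1²) < ∞. -/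
open MeasureTheory ProbabilityTheory Filter
open scoped ENNReal NNReal

/-! Write `Y_{k,m} = X_{i_m^{(k)}}` for the `nK` drawn values, so that the statistic is their
average. Splitting along the value of an index that is independent of the sample gives
`E[Z_I] = ∑ᵢ P(I = i) E[Z_i]`. Hence each draw has variance `σ²`, and two distinct draws, whose
indices are independent and uniform, have covariance `N⁻² ∑ᵢⱼ cov(Xᵢ, Xⱼ) = σ²/N`. Adding the
`nK` variances and `nK(nK - 1)` covariances gives `(nK)² σ² (1/(nK) + 1/N - 1/(nNK))`. -/

open Finset

lemma sum_sum_ite_eq_const {ι R : Type*} [Fintype ι] [DecidableEq ι] [CommRing R] (a b : R) :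
    ∑ i : ι, ∑ j : ι, (if i = j then a else b)
      = Fintype.card ι * (a + (Fintype.card ι - 1) * b) := by
  have hrow : ∀ i : ι, ∑ j : ι, (if i = j then a else b) = Fintype.card ι * b + (a - b) := by
    intro i
    simp_rw [show ∀ j, (if i = j then a else b) = b + if i = j then a - b else 0 from
      fun j => by split_ifs <;> ring]
    simp [sum_add_distrib]
  simp only [hrow, sum_const, card_univ, nsmul_eq_mul]
  ring

lemma variance_sum_of_covariance_eq_ite {Ω ι : Type*} [MeasurableSpace Ω] {μ : Measure Ω}
    [IsFiniteMeasure μ] [Fintype ι] [DecidableEq ι] {Y : ι → Ω → ℝ}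
    (hY : ∀ i, MemLp (Y i) 2 μ) {v c : ℝ}
    (hcov : ∀ i j, cov[Y i, Y j; μ] = if i = j then v else c) :
    Var[fun ω => ∑ i, Y i ω; μ] = Fintype.card ι * (v + (Fintype.card ι - 1) * c) := by
  rw [variance_fun_sum hY]
  simp_rw [hcov]
  exact sum_sum_ite_eq_const v c

lemma apply_index_eq_sum_indicator {Ω ι E : Type*} [Fintype ι] [AddCommMonoid E] (I : Ω → ι)
    (Z : ι → Ω → E) (ω : Ω) : Z (I ω) ω = ∑ i, (I ⁻¹' {i}).indicator (Z i) ω := by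
  rw [Finset.sum_eq_single (I ω) (fun i _ hi => by simp [Ne.symm hi]) (by simp)]
  simp

section RandomIndex

variable {Ω ι : Type*} [MeasurableSpace Ω] {μ : Measure Ω} [Fintype ι] [MeasurableSpace ι]
  [MeasurableSingletonClass ι] {I : Ω → ι}

lemma memLp_apply_index {Z : ι → Ω → ℝ} {p : ℝ≥0∞} (hI : Measurable I)
    (hZ : ∀ i, MemLp (Z i) p μ) :
    MemLp (fun ω => Z (I ω) ω) p μ := by
  simp_rw [apply_index_eq_sum_indicator I Z]
  exact memLp_finsetSum _ fun i _ => (hZ i).indicator (hI (measurableSet_singleton i))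

lemma integral_apply_index_of_indepFun {Z : ι → Ω → ℝ} (hI : Measurable I)
    (hZ : ∀ i, Integrable (Z i) μ) (hIZ : IndepFun I (fun ω i => Z i ω) μ) :
    ∫ ω, Z (I ω) ω ∂μ = ∑ i, μ.real (I ⁻¹' {i}) * ∫ ω, Z i ω ∂μ := by
  simp_rw [apply_index_eq_sum_indicator I Z]
  rw [integral_finsetSum _ fun i _ => (hZ i).indicator (hI (measurableSet_singleton i))]
  refine sum_congr rfl fun i _ => ?_
  have hφ : Measurable (({i} : Set ι).indicator (1 : ι → ℝ)) :=
    measurable_one.indicator (measurableSet_singleton i)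
  have hsplit : (I ⁻¹' {i}).indicator (Z i) = (({i} : Set ι).indicator 1 ∘ I) * Z i := by
    ext ω
    by_cases h : I ω = i <;> simp [h]
  have hindep : IndepFun (({i} : Set ι).indicator 1 ∘ I) (Z i) μ :=
    hIZ.comp hφ (measurable_pi_apply i)
  rw [hsplit, hindep.integral_mul_eq_mul_integral (hφ.comp hI).aestronglyMeasurable
    (hZ i).aestronglyMeasurable]
  exact congrArg (· * _) (integral_indicator_one (hI (measurableSet_singleton i)))

lemma integral_apply_index_of_indepFun_of_uniform {Z : ι → Ω → ℝ} (hI : Measurable I)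
    (hunif : ∀ i, μ (I ⁻¹' {i}) = (Fintype.card ι : ℝ≥0∞)⁻¹)
    (hZ : ∀ i, Integrable (Z i) μ) (hIZ : IndepFun I (fun ω i => Z i ω) μ) :
    ∫ ω, Z (I ω) ω ∂μ = (Fintype.card ι : ℝ)⁻¹ * ∑ i, ∫ ω, Z i ω ∂μ := by
  rw [integral_apply_index_of_indepFun hI hZ hIZ, mul_sum]
  simp [measureReal_def, hunif]

lemma variance_apply_index_of_indepFun_of_uniform [IsProbabilityMeasure μ] {X : ι → Ω → ℝ}
    {m : ℝ} (hI : Measurable I) (hunif : ∀ i, μ (I ⁻¹' {i}) = (Fintype.card ι : ℝ≥0∞)⁻¹)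
    (hX : ∀ i, MemLp (X i) 2 μ) (hmean : ∀ i, μ[X i] = m)
    (hIX : IndepFun I (fun ω i => X i ω) μ) :
    Var[fun ω => X (I ω) ω; μ] = (Fintype.card ι : ℝ)⁻¹ * ∑ i, Var[X i; μ] := by
  have : Nonempty ι := (nonempty_of_isProbabilityMeasure μ).map I
  have hint : ∀ i, Integrable (X i) μ := fun i => (hX i).integrable one_le_two
  have hY := memLp_apply_index hI hX
  have hmeanY : μ[fun ω => X (I ω) ω] = m := by
    rw [integral_apply_index_of_indepFun hI hint hIX]
    simp_rw [hmean]
    rw [← sum_mul, sum_measureReal_preimage_singleton (μ := μ) _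
      (fun i _ => hI (measurableSet_singleton i))]
    simp
  have hIXX : IndepFun I (fun ω i => X i ω * X i ω) μ :=
    hIX.comp (ψ := fun (x : ι → ℝ) i => x i * x i) measurable_id (by fun_prop)
  have hsq : μ[fun ω => X (I ω) ω * X (I ω) ω] = (Fintype.card ι : ℝ)⁻¹ * ∑ i, μ[X i * X i] :=
    integral_apply_index_of_indepFun_of_uniform hI hunif
      (fun i => (hX i).integrable_mul (hX i)) hIXX
  rw [← covariance_self hY.aemeasurable, covariance_eq_sub hY hY]
  simp_rw [← covariance_self (hX _).aemeasurable, covariance_eq_sub (hX _) (hX _), hmean]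
  rw [Pi.mul_def, hsq, hmeanY, sum_sub_distrib, mul_sub, sum_const, card_univ, nsmul_eq_mul,
    inv_mul_cancel_left₀ (by positivity)]

lemma covariance_apply_index_of_indepFun_of_uniform [IsProbabilityMeasure μ] {X : ι → Ω → ℝ}
    {J : Ω → ι} (hI : Measurable I) (hJ : Measurable J)
    (hunifI : ∀ i, μ (I ⁻¹' {i}) = (Fintype.card ι : ℝ≥0∞)⁻¹)
    (hunifJ : ∀ i, μ (J ⁻¹' {i}) = (Fintype.card ι : ℝ≥0∞)⁻¹) (hIJ : IndepFun I J μ)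
    (hX : ∀ i, MemLp (X i) 2 μ) (hIJX : IndepFun (fun ω => (I ω, J ω)) (fun ω i => X i ω) μ) :
    cov[fun ω => X (I ω) ω, fun ω => X (J ω) ω; μ]
      = ((Fintype.card ι : ℝ)⁻¹) ^ 2 * ∑ i, ∑ j, cov[X i, X j; μ] := by
  have hint : ∀ i, Integrable (X i) μ := fun i => (hX i).integrable one_le_two
  have hunifIJ : ∀ r : ι × ι, μ ((fun ω => (I ω, J ω)) ⁻¹' {r})
      = (Fintype.card (ι × ι) : ℝ≥0∞)⁻¹ := by
    rintro ⟨i, j⟩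
    rw [← Set.singleton_prod_singleton, Set.mk_preimage_prod,
      hIJ.measure_inter_preimage_eq_mul _ _ (measurableSet_singleton i)
        (measurableSet_singleton j), hunifI, hunifJ, Fintype.card_prod, Nat.cast_mul,
      ENNReal.mul_inv (by simp) (by simp)]
  have hIJXX : IndepFun (fun ω => (I ω, J ω)) (fun ω (r : ι × ι) => X r.1 ω * X r.2 ω) μ :=
    hIJX.comp (ψ := fun (x : ι → ℝ) (r : ι × ι) => x r.1 * x r.2) measurable_id (by fun_prop)
  have hprod : μ[fun ω => X (I ω) ω * X (J ω) ω]
      = (Fintype.card (ι × ι) : ℝ)⁻¹ * ∑ r : ι × ι, μ[X r.1 * X r.2] :=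
    integral_apply_index_of_indepFun_of_uniform (hI.prodMk hJ) hunifIJ
      (fun r => (hX r.1).integrable_mul (hX r.2)) hIJXX
  have hIX : IndepFun I (fun ω i => X i ω) μ := hIJX.comp measurable_fst measurable_id
  have hJX : IndepFun J (fun ω i => X i ω) μ := hIJX.comp measurable_snd measurable_id
  rw [covariance_eq_sub (memLp_apply_index hI hX) (memLp_apply_index hJ hX), Pi.mul_def, hprod,
    integral_apply_index_of_indepFun_of_uniform hI hunifI hint hIX,
    integral_apply_index_of_indepFun_of_uniform hJ hunifJ hint hJX]
  simp_rw [covariance_eq_sub (hX _) (hX _)]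
  rw [Fintype.sum_prod_type, Fintype.card_prod, Nat.cast_mul, mul_inv, ← sq, mul_mul_mul_comm,
    ← sq, sum_mul_sum, ← mul_sub, ← sum_sub_distrib]
  simp_rw [← sum_sub_distrib]

end RandomIndex

theorem averaged_subsample_mean_variance_general
    {Ω : Type*} [MeasurableSpace Ω] (P : Measure Ω) [IsProbabilityMeasure P]
    {N n K : ℕ} (hN : 0 < N) (hn : 2 ≤ n) (hK : 0 < K)
    (X : Fin N → Ω → ℝ) (idx : Fin K → Fin n → Ω → Fin N)
    -- the Xᵢ are i.i.d. real random variables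
    (hXindep : iIndepFun X P)
    (hXident : ∀ i j, IdentDistrib (X i) (X j) P P)
    -- the sampling indices are measurable, mutually independent,
    -- independent of (X₁, …, X_N), and uniformly distributed on {1, …, N}
    (hidxmeas : ∀ k m, Measurable (idx k m))
    (hidxindep : iIndepFun
      (fun p : Fin K × Fin n => idx p.1 p.2) P)
    (hidxX : IndepFun (fun ω (p : Fin K × Fin n) => idx p.1 p.2 ω)
      (fun ω (i : Fin N) => X i ω) P)
    (hunif : ∀ k m (j : Fin N), P (idx k m ⁻¹' {j}) = (N : ℝ≥0∞)⁻¹)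
    -- E(X₁²) < ∞
    (hL2 : MemLp (X ⟨0, hN⟩) 2 P)
    (σ2 : ℝ) (hσ2 : σ2 = variance (X ⟨0, hN⟩) P) :
    variance (fun ω => (K : ℝ)⁻¹ * ∑ k, subMean X (idx k) ω) P
      = σ2 * (1 / ((n : ℝ) * (K : ℝ)) + 1 / (N : ℝ)
          - 1 / ((n : ℝ) * (N : ℝ) * (K : ℝ))) := by
  have hX : ∀ i, MemLp (X i) 2 P := fun i => (hXident ⟨0, hN⟩ i).memLp_snd hL2
  have hvarX : ∀ i, Var[X i; P] = σ2 := fun i => hσ2 ▸ (hXident ⟨0, hN⟩ i).variance_eq.symm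
  have hcovX : ∀ i j, cov[X i, X j; P] = if i = j then σ2 else 0 := by
    intro i j
    split_ifs with hij
    · rw [hij, covariance_self (hX j).aemeasurable, hvarX]
    · exact (hXindep.indepFun hij).covariance_eq_zero (hX i) (hX j)
  have hunif' : ∀ p : Fin K × Fin n, ∀ j,
      P (idx p.1 p.2 ⁻¹' {j}) = (Fintype.card (Fin N) : ℝ≥0∞)⁻¹ := by
    simpa using fun p : Fin K × Fin n => hunif p.1 p.2
  have hcovY : ∀ p q : Fin K × Fin n,
      cov[fun ω => X (idx p.1 p.2 ω) ω, fun ω => X (idx q.1 q.2 ω) ω; P]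
        = if p = q then σ2 else σ2 / N := by
    intro p q
    split_ifs with hpq
    · rw [hpq, covariance_self (memLp_apply_index (hidxmeas _ _) hX).aemeasurable,
        variance_apply_index_of_indepFun_of_uniform (hidxmeas _ _) (hunif' q) hX
          (fun i => (hXident ⟨0, hN⟩ i).integral_eq.symm)
          (hidxX.comp (measurable_pi_apply q) measurable_id)]
      simp [hvarX, hN.ne']
    · rw [covariance_apply_index_of_indepFun_of_uniform (hidxmeas _ _) (hidxmeas _ _) (hunif' p)
        (hunif' q) (hidxindep.indepFun hpq) hX
        (hidxX.comp (φ := fun f => (f p, f q)) (by fun_prop) measurable_id)]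
      simp_rw [hcovX]
      rw [sum_sum_ite_eq_const, Fintype.card_fin, mul_zero, add_zero]
      field_simp
  have hstat : (fun ω => (K : ℝ)⁻¹ * ∑ k, subMean X (idx k) ω)
      = fun ω => ((n : ℝ) * K)⁻¹ * ∑ p : Fin K × Fin n, X (idx p.1 p.2 ω) ω := by
    ext ω
    simp only [subMean, Fintype.sum_prod_type, ← mul_sum]
    ring
  rw [hstat, variance_const_mul, variance_sum_of_covariance_eq_ite
    (fun p => memLp_apply_index (hidxmeas _ _) hX) hcovY]
  have hn0 : (n : ℝ) ≠ 0 := by positivity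
  have hK0 : (K : ℝ) ≠ 0 := by positivity
  simp only [Fintype.card_prod, Fintype.card_fin, Nat.cast_mul]
  field_simp
  ring

/-- the exact variance of the average of the `K` subsample means is
`Var(K⁻¹ ∑ₖ μ̂⁽ᵏ⁾) = σ² (1/(nK) + 1/N − 1/(nNK))`. -/
theorem averaged_subsample_mean_variance
    {Ω : Type*} [MeasurableSpace Ω] (P : Measure Ω) [IsProbabilityMeasure P]
    {N n K : ℕ} (hN : 0 < N) (hn : 2 ≤ n) (hK : 0 < K)
    (X : Fin N → Ω → ℝ) (idx : Fin K → Fin n → Ω → Fin N)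
    -- the Xᵢ are i.i.d. real random variables
    (hXmeas : ∀ i, Measurable (X i))
    (hXindep : iIndepFun X P)
    (hXident : ∀ i j, IdentDistrib (X i) (X j) P P)
    -- the sampling indices are measurable, mutually independent,
    -- independent of (X₁, …, X_N), and uniformly distributed on {1, …, N}
    (hidxmeas : ∀ k m, Measurable (idx k m))
    (hidxindep : iIndepFun
      (fun p : Fin K × Fin n => idx p.1 p.2) P)
    (hidxX : IndepFun (fun ω (p : Fin K × Fin n) => idx p.1 p.2 ω)
      (fun ω (i : Fin N) => X i ω) P)
    (hunif : ∀ k m (j : Fin N), P (idx k m ⁻¹' {j}) = (N : ℝ≥0∞)⁻¹)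
    -- E(X₁²) < ∞
    (hL2 : MemLp (X ⟨0, hN⟩) 2 P)
    (σ2 : ℝ) (hσ2 : σ2 = variance (X ⟨0, hN⟩) P) :
    variance (fun ω => (K : ℝ)⁻¹ * ∑ k, subMean X (idx k) ω) P
      = σ2 * (1 / ((n : ℝ) * (K : ℝ)) + 1 / (N : ℝ)
          - 1 / ((n : ℝ) * (N : ℝ) * (K : ℝ))) :=
  averaged_subsample_mean_variance_general P hN hn hK X idx hXindep hXident hidxmeas hidxindep hidxX
    hunif hL2 σ2 hσ2
end

section
/- For the identity transformation, the conditional expectation of the jackknife sum of squared differences recovers the whole-sample variance: if E(X_1²) < ∞, then for every k, E[ Σ_{m=1}^n (μ̂^{(k)}_{−m} − μ̂^{(k)})² | X_1, …, X_N ] = σ̂²/(n − 1) almost surely. -/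
open MeasureTheory ProbabilityTheory Filter
open scoped ENNReal NNReal

/-!
Conditionally on `X₁, …, X_N`, the `m`-th draw `Y_m = X_{i_m}` is `X_j` with probability `1/N`
for each `j`, and two different draws are independent, so
`E[Y_m Y_{m'} | X] = X̄² + [m = m'] σ̂²`. The jackknife sum is the quadratic form
`(n-1)⁻² ∑_{m,m'} ([m = m'] - 1/n) Y_m Y_{m'}`, whose coefficients sum to `0` overall and to
`(n-1)⁻¹` along the diagonal; taking conditional expectations term by term leaves `σ̂²/(n-1)`.
-/

theorem condExp_sum_mul {Ω ι : Type*} {m mΩ : MeasurableSpace Ω} {P : Measure[mΩ] Ω}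
    [Fintype ι] (c : ι → ℝ) {Z : ι → Ω → ℝ} (hZ : ∀ i, Integrable (Z i) P) :
    P[fun ω => ∑ i, c i * Z i ω | m] =ᵐ[P] fun ω => ∑ i, c i * P[Z i | m] ω := by
  have hsum : (fun ω => ∑ i, c i * Z i ω) = ∑ i, c i • Z i := by
    ext ω; simp [Finset.sum_apply]
  rw [hsum]
  refine (condExp_finsetSum (fun i _ => (hZ i).smul (c i)) m).trans ?_
  filter_upwards [ae_all_iff.2 fun i => condExp_smul (μ := P) (c i) (Z i) m] with ω hω
  simp [Finset.sum_apply, hω]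

section RandomIndex

variable {Ω ι : Type*} {m₀ mi mΩ : MeasurableSpace Ω} {P : Measure[mΩ] Ω}

theorem eval_eq_sum_indicator [Fintype ι] (J : Ω → ι) (F : ι → Ω → ℝ) :
    (fun ω => F (J ω) ω) = ∑ j, (J ⁻¹' {j}).indicator (F j) := by
  classical
  ext ω
  simp [Finset.sum_apply, Set.indicator_apply]

theorem integrable_eval [Fintype ι] [MeasurableSpace ι] [MeasurableSingletonClass ι]
    {J : Ω → ι} (hJ : Measurable J) {F : ι → Ω → ℝ} (hF : ∀ j, Integrable (F j) P) :
    Integrable (fun ω => F (J ω) ω) P := by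
  rw [eval_eq_sum_indicator]
  exact integrable_finsetSum' _ fun j _ => (hF j).indicator (hJ (measurableSet_singleton j))

variable [IsFiniteMeasure P]

theorem condExp_indicator_of_indep (hm₀ : m₀ ≤ mΩ) (hmi : mi ≤ mΩ)
    (hindep : Indep mi m₀ P) {A : Set Ω} (hA : MeasurableSet[mi] A) {f : Ω → ℝ}
    (hf : StronglyMeasurable[m₀] f) (hfint : Integrable f P) :
    P[A.indicator f | m₀] =ᵐ[P] fun ω => P.real A * f ω := by
  have hA' : MeasurableSet A := hmi _ hA
  have hsplit : A.indicator f = f * A.indicator (1 : Ω → ℝ) := by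
    ext ω; by_cases h : ω ∈ A <;> simp [h]
  rw [hsplit]
  refine (condExp_mul_of_stronglyMeasurable_left hf (hsplit ▸ hfint.indicator hA')
    ((integrable_const 1).indicator hA')).trans ?_
  filter_upwards [condExp_indep_eq hmi hm₀
    (stronglyMeasurable_one.indicator hA : StronglyMeasurable[mi] (A.indicator (1 : Ω → ℝ)))
    hindep] with ω hω
  rw [Pi.mul_apply, hω, integral_indicator_one hA', mul_comm]

theorem condExp_eval_of_indep [Fintype ι] [MeasurableSpace ι] [MeasurableSingletonClass ι]
    (hm₀ : m₀ ≤ mΩ) (hmi : mi ≤ mΩ) (hindep : Indep mi m₀ P)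
    {J : Ω → ι} (hJ : Measurable[mi] J) {F : ι → Ω → ℝ}
    (hF : ∀ j, StronglyMeasurable[m₀] (F j)) (hFint : ∀ j, Integrable (F j) P) :
    P[fun ω => F (J ω) ω | m₀] =ᵐ[P] fun ω => ∑ j, P.real (J ⁻¹' {j}) * F j ω := by
  have hJset : ∀ j, MeasurableSet[mi] (J ⁻¹' {j}) := fun j => hJ (measurableSet_singleton j)
  rw [eval_eq_sum_indicator]
  refine (condExp_finsetSum (fun j _ => (hFint j).indicator (hmi _ (hJset j))) m₀).trans ?_
  filter_upwards [ae_all_iff.2 fun j =>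
    condExp_indicator_of_indep hm₀ hmi hindep (hJset j) (hF j) (hFint j)] with ω hω
  simp [Finset.sum_apply, hω]

end RandomIndex

theorem wsVar_eq_sub {Ω : Type*} {N : ℕ} (X : Fin N → Ω → ℝ) (ω : Ω) :
    wsVar X ω = (N : ℝ)⁻¹ * ∑ i, X i ω ^ 2 - wsMean X ω ^ 2 := by
  rcases N.eq_zero_or_pos with rfl | hN
  · simp [wsVar, wsMean]
  have hsum : ∑ i, X i ω = N * wsMean X ω := by
    rw [wsMean]; field_simp
  simp only [wsVar, sub_sq, Finset.sum_add_distrib, Finset.sum_sub_distrib, ← Finset.sum_mul,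
    ← Finset.mul_sum, hsum, Finset.sum_const, Finset.card_univ, Fintype.card_fin, nsmul_eq_mul]
  field_simp
  ring

noncomputable def jackknifeCoeff (n : ℕ) (m m' : Fin n) : ℝ :=
  (((n : ℝ) - 1) ^ 2)⁻¹ * ((if m = m' then 1 else 0) - (n : ℝ)⁻¹)

theorem sum_sq_looMean_sub_subMean {n : ℕ} (hn : 2 ≤ n) (y : Fin n → ℝ) :
    ∑ m, (((n : ℝ) - 1)⁻¹ * ∑ m' ∈ Finset.univ.erase m, y m' - (n : ℝ)⁻¹ * ∑ m', y m') ^ 2 =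
      ∑ m, ∑ m', jackknifeCoeff n m m' * (y m * y m') := by
  have hn' : (2 : ℝ) ≤ n := by exact_mod_cast hn
  have hn1 : (n : ℝ) - 1 ≠ 0 := by linarith
  have hn0 : (n : ℝ) ≠ 0 := by linarith
  set S := ∑ m', y m'
  have hloo : ∀ m, ((n : ℝ) - 1)⁻¹ * ∑ m' ∈ Finset.univ.erase m, y m' - (n : ℝ)⁻¹ * S =
      ((n : ℝ) - 1)⁻¹ * ((n : ℝ)⁻¹ * S - y m) := by
    intro m
    rw [Finset.sum_erase_eq_sub (Finset.mem_univ m)]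
    field_simp
    ring
  have hdev : ∑ m, ((n : ℝ)⁻¹ * S - y m) ^ 2 = ∑ m, y m ^ 2 - (n : ℝ)⁻¹ * S ^ 2 := by
    simp only [sub_sq, Finset.sum_add_distrib, Finset.sum_sub_distrib, ← Finset.mul_sum,
      Finset.sum_const, Finset.card_univ, Fintype.card_fin, nsmul_eq_mul]
    field_simp
    ring
  have hquad : ∑ m, ∑ m', ((if m = m' then 1 else 0) - (n : ℝ)⁻¹) * (y m * y m') =
      ∑ m, y m ^ 2 - (n : ℝ)⁻¹ * S ^ 2 := by
    simp only [sub_mul, ite_mul, one_mul, zero_mul, Finset.sum_sub_distrib, Finset.sum_ite_eq,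
      Finset.mem_univ, if_true, ← Finset.mul_sum, sq]
    rw [← Finset.sum_mul]
  simp_rw [jackknifeCoeff, hloo, mul_pow, ← Finset.mul_sum, hdev, ← hquad, Finset.mul_sum,
    inv_pow, mul_assoc]

theorem sum_jackknifeCoeff_mul {n : ℕ} (hn : 2 ≤ n) (a b : ℝ) :
    ∑ m, ∑ m', jackknifeCoeff n m m' * (a + if m = m' then b else 0) = b / ((n : ℝ) - 1) := by
  have hn' : (2 : ℝ) ≤ n := by exact_mod_cast hn
  have hn1 : (n : ℝ) - 1 ≠ 0 := by linarith
  have hn0 : (n : ℝ) ≠ 0 := by linarith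
  have hsplit : ∀ m m', jackknifeCoeff n m m' * (a + if m = m' then b else 0) =
      (((n : ℝ) - 1) ^ 2)⁻¹ *
        ((if m = m' then a + b - (n : ℝ)⁻¹ * b else 0) - (n : ℝ)⁻¹ * a) := by
    intro m m'; rw [jackknifeCoeff]; split_ifs <;> ring
  simp only [hsplit, ← Finset.mul_sum, Finset.sum_sub_distrib, Finset.sum_ite_eq,
    Finset.mem_univ, if_true, Finset.sum_const, Finset.card_univ, Fintype.card_fin, nsmul_eq_mul]
  field_simp
  ring

section Sampling

variable {Ω : Type*} {m₀ mi mΩ : MeasurableSpace Ω} {P : Measure[mΩ] Ω} [IsFiniteMeasure P]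
  {N n : ℕ} {X : Fin N → Ω → ℝ} {J : Fin n → Ω → Fin N}

theorem condExp_sample_mul_sample (hm₀ : m₀ ≤ mΩ) (hmi : mi ≤ mΩ)
    (hindep : Indep mi m₀ P) (hX : ∀ i, StronglyMeasurable[m₀] (X i))
    (hX2 : ∀ i, MemLp (X i) 2 P)
    (hJ : ∀ m, Measurable[mi] (J m)) (hJindep : Pairwise fun m m' => IndepFun (J m) (J m') P)
    (hunif : ∀ m j, P (J m ⁻¹' {j}) = (N : ℝ≥0∞)⁻¹) (m m' : Fin n) :
    P[fun ω => X (J m ω) ω * X (J m' ω) ω | m₀] =ᵐ[P]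
      fun ω => wsMean X ω ^ 2 + if m = m' then wsVar X ω else 0 := by
  have hunif' : ∀ m j, P.real (J m ⁻¹' {j}) = (N : ℝ)⁻¹ := fun m j => by
    simp [measureReal_def, hunif]
  have hXX : ∀ i i', Integrable (fun ω => X i ω * X i' ω) P := fun i i' =>
    (hX2 i).integrable_mul (hX2 i')
  split_ifs with h
  · subst h
    filter_upwards [condExp_eval_of_indep hm₀ hmi hindep (hJ m) (F := fun i ω => X i ω * X i ω)
      (fun i => (hX i).mul (hX i)) (fun i => hXX i i)] with ω hω
    rw [hω, wsVar_eq_sub]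
    simp only [hunif', ← Finset.mul_sum, sq]
    ring
  · have hpair : ∀ i i', P.real ((fun ω => (J m ω, J m' ω)) ⁻¹' {(i, i')}) =
        (N : ℝ)⁻¹ * (N : ℝ)⁻¹ := fun i i' => by
      rw [← Set.singleton_prod_singleton, Set.mk_preimage_prod, measureReal_def,
        (hJindep h).measure_inter_preimage_eq_mul _ _ (measurableSet_singleton i)
          (measurableSet_singleton i'), ENNReal.toReal_mul, ← measureReal_def,
        ← measureReal_def, hunif', hunif']
    filter_upwards [condExp_eval_of_indep hm₀ hmi hindep ((hJ m).prodMk (hJ m'))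
      (F := fun p ω => X p.1 ω * X p.2 ω) (fun p => (hX p.1).mul (hX p.2))
      (fun p => hXX p.1 p.2)] with ω hω
    rw [hω, Fintype.sum_prod_type]
    simp only [hpair, ← Finset.mul_sum]
    rw [← Finset.sum_mul, wsMean]
    ring

theorem condExp_sum_sq_looMean_sub_subMean (hn : 2 ≤ n) (hm₀ : m₀ ≤ mΩ) (hmi : mi ≤ mΩ)
    (hindep : Indep mi m₀ P) (hX : ∀ i, StronglyMeasurable[m₀] (X i))
    (hX2 : ∀ i, MemLp (X i) 2 P) (hJ : ∀ m, Measurable[mi] (J m))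
    (hJindep : Pairwise fun m m' => IndepFun (J m) (J m') P)
    (hunif : ∀ m j, P (J m ⁻¹' {j}) = (N : ℝ≥0∞)⁻¹) :
    P[fun ω => ∑ m, (looMean X J m ω - subMean X J ω) ^ 2 | m₀] =ᵐ[P]
      fun ω => wsVar X ω / ((n : ℝ) - 1) := by
  have hexpand : (fun ω => ∑ m, (looMean X J m ω - subMean X J ω) ^ 2) =
      fun ω => ∑ p : Fin n × Fin n,
        jackknifeCoeff n p.1 p.2 * (X (J p.1 ω) ω * X (J p.2 ω) ω) := by
    ext ω
    rw [Fintype.sum_prod_type]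
    exact sum_sq_looMean_sub_subMean hn fun m => X (J m ω) ω
  have hint : ∀ p : Fin n × Fin n, Integrable (fun ω => X (J p.1 ω) ω * X (J p.2 ω) ω) P :=
    fun p => integrable_eval (F := fun q ω => X q.1 ω * X q.2 ω)
      (((hJ p.1).prodMk (hJ p.2)).mono hmi le_rfl)
      fun q => (hX2 q.1).integrable_mul (hX2 q.2)
  rw [hexpand]
  filter_upwards [condExp_sum_mul (fun p => jackknifeCoeff n p.1 p.2) hint,
    ae_all_iff.2 fun p : Fin n × Fin n =>
      condExp_sample_mul_sample hm₀ hmi hindep hX hX2 hJ hJindep hunif p.1 p.2] with ω hω hpair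
  rw [hω, ← sum_jackknifeCoeff_mul hn (wsMean X ω ^ 2) (wsVar X ω), ← Fintype.sum_prod_type']
  simp only [hpair]

end Sampling

theorem jackknife_sum_sq_condexp_general
    {Ω : Type*} [MeasurableSpace Ω] (P : Measure Ω) [IsProbabilityMeasure P]
    {N n K : ℕ} (hN : 0 < N) (hn : 2 ≤ n)
    (X : Fin N → Ω → ℝ) (idx : Fin K → Fin n → Ω → Fin N)
    -- the Xᵢ are i.i.d. real random variables
    (hXmeas : ∀ i, Measurable (X i))
    (hXident : ∀ i j, IdentDistrib (X i) (X j) P P)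
    -- the sampling indices are measurable, mutually independent,
    -- independent of (X₁, …, X_N), and uniformly distributed on {1, …, N}
    (hidxmeas : ∀ k m, Measurable (idx k m))
    (hidxindep : iIndepFun
      (fun p : Fin K × Fin n => idx p.1 p.2) P)
    (hidxX : IndepFun (fun ω (p : Fin K × Fin n) => idx p.1 p.2 ω)
      (fun ω (i : Fin N) => X i ω) P)
    (hunif : ∀ k m (j : Fin N), P (idx k m ⁻¹' {j}) = (N : ℝ≥0∞)⁻¹)
    -- E(X₁²) < ∞
    (hL2 : MemLp (X ⟨0, hN⟩) 2 P)
    (k : Fin K) :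
    P[(fun ω => ∑ m, (looMean X (idx k) m ω - subMean X (idx k) ω) ^ 2) |
        MeasurableSpace.comap (fun ω (i : Fin N) => X i ω) inferInstance]
      =ᵐ[P] fun ω => wsVar X ω / ((n : ℝ) - 1) := by
  set Xvec := fun ω (i : Fin N) => X i ω
  set idxvec := fun ω (p : Fin K × Fin n) => idx p.1 p.2 ω
  have hXvec : Measurable Xvec := measurable_pi_lambda _ hXmeas
  have hidxvec : Measurable idxvec := measurable_pi_lambda _ fun p => hidxmeas p.1 p.2
  exact condExp_sum_sq_looMean_sub_subMean hn hXvec.comap_le hidxvec.comap_le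
    ((IndepFun_iff_Indep _ _ P).mp hidxX)
    (fun i => ((measurable_pi_apply i).comp (comap_measurable Xvec)).stronglyMeasurable)
    (fun i => (hXident ⟨0, hN⟩ i).memLp_snd hL2)
    (fun m => (measurable_pi_apply (k, m)).comp (comap_measurable idxvec))
    (fun m m' h => hidxindep.indepFun (i := (k, m)) (j := (k, m'))
      fun e => h (congrArg Prod.snd e))
    (hunif k)

/-- for the identity transformation, the conditional expectation of the
jackknife sum of squared differences recovers the whole-sample variance: if
`E(X₁²) < ∞`, then `E[∑ₘ (μ̂⁽ᵏ⁾₋ₘ − μ̂⁽ᵏ⁾)² | X₁, …, X_N] = σ̂²/(n−1)` a.s. -/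
theorem jackknife_sum_sq_condexp
    {Ω : Type*} [MeasurableSpace Ω] (P : Measure Ω) [IsProbabilityMeasure P]
    {N n K : ℕ} (hN : 0 < N) (hn : 2 ≤ n) (hK : 0 < K)
    (X : Fin N → Ω → ℝ) (idx : Fin K → Fin n → Ω → Fin N)
    -- the Xᵢ are i.i.d. real random variables
    (hXmeas : ∀ i, Measurable (X i))
    (hXindep : iIndepFun X P)
    (hXident : ∀ i j, IdentDistrib (X i) (X j) P P)
    -- the sampling indices are measurable, mutually independent,
    -- independent of (X₁, …, X_N), and uniformly distributed on {1, …, N}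
    (hidxmeas : ∀ k m, Measurable (idx k m))
    (hidxindep : iIndepFun
      (fun p : Fin K × Fin n => idx p.1 p.2) P)
    (hidxX : IndepFun (fun ω (p : Fin K × Fin n) => idx p.1 p.2 ω)
      (fun ω (i : Fin N) => X i ω) P)
    (hunif : ∀ k m (j : Fin N), P (idx k m ⁻¹' {j}) = (N : ℝ≥0∞)⁻¹)
    -- E(X₁²) < ∞
    (hL2 : MemLp (X ⟨0, hN⟩) 2 P)
    (k : Fin K) :
    P[(fun ω => ∑ m, (looMean X (idx k) m ω - subMean X (idx k) ω) ^ 2) |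
        MeasurableSpace.comap (fun ω (i : Fin N) => X i ω) inferInstance]
      =ᵐ[P] fun ω => wsVar X ω / ((n : ℝ) - 1) :=
  jackknife_sum_sq_condexp_general P hN hn X idx hXmeas hXident hidxmeas hidxindep hidxX hunif hL2 k
end

section
/- The bias of the subsample one-shot estimator does not improve with the number of subsamples while its conditional variance does: if g : ℝ → ℝ is measurable and g(μ̂^{(1)}) is square integrable, then E(θ̂_SOS) = E(θ̂^{(1)}), and Var(θ̂_SOS | X_1, …, X_N) = K^{-1} Var(θ̂^{(1)} | X_1, …, X_N) almost surely. -/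
open MeasureTheory ProbabilityTheory Filter
open scoped ENNReal NNReal

/-!
Put `Z = (X₁, …, X_N)` and let `I` be the whole `K × n` array of sampling indices, so that
`θ̂⁽ᵏ⁾ = s(Iₖ, Z)` for the `k`-th row `Iₖ` of `I` and a fixed measurable `s`. The array `I` is
independent of `Z` and uniform on its finite range, so conditioning on `Z` amounts to averaging
over all index arrays with `Z` frozen: `E[F(I, Z) | Z] = 𝔼ᵤ F(u, Z)`. Under this uniform average
the rows are i.i.d. uniform, so all `θ̂⁽ᵏ⁾` have the same conditional mean and the cross terms in
the conditional variance of their average vanish, leaving `K⁻¹` times the conditional variance of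
a single `θ̂⁽ᵏ⁾`. For the bias, the pairs `(Iₖ, Z)` all have the same law, hence so do the `θ̂⁽ᵏ⁾`.
-/

open Finset
open scoped BigOperators

namespace Fintype

variable {ι V R : Type*} [Fintype ι] [DecidableEq ι] [Fintype V] [Field R] [CharZero R]

lemma expect_pi_prod (f : ι → V → R) : 𝔼 w : ι → V, ∏ i, f i (w i) = ∏ i, 𝔼 v, f i v := by
  simp only [expect_eq_sum_div_card, ← prod_sum, prod_div_distrib, prod_const, card_pi]
  push_cast
  rfl

variable [Nonempty V]

lemma expect_pi_apply (t : V → R) (k : ι) : 𝔼 w : ι → V, t (w k) = 𝔼 v, t v := by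
  have hk (f : ι → R) (hf : ∀ i ≠ k, f i = 1) : ∏ i, f i = f k :=
    Finset.prod_eq_single k (fun i _ hi => hf i hi) (by simp)
  calc 𝔼 w : ι → V, t (w k)
      = 𝔼 w : ι → V, ∏ i, Function.update (1 : ι → V → R) k t i (w i) :=
        expect_congr rfl fun w _ => by rw [hk _ fun i hi => by simp [hi]]; simp
    _ = 𝔼 v, t v := by rw [expect_pi_prod, hk _ fun i hi => by simp [hi]]; simp

lemma expect_pi_apply_mul_apply (t t' : V → R) {k k' : ι} (hk : k ≠ k') :
    𝔼 w : ι → V, t (w k) * t' (w k') = (𝔼 v, t v) * 𝔼 v, t' v := by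
  have hkk' (f : ι → R) (hf : ∀ i ≠ k, i ≠ k' → f i = 1) : ∏ i, f i = f k * f k' :=
    Finset.prod_eq_mul k k' hk (fun i _ hi => hf i hi.1 hi.2) (by simp) (by simp)
  let f : ι → V → R := Function.update (Function.update 1 k t) k' t'
  calc 𝔼 w : ι → V, t (w k) * t' (w k')
      = 𝔼 w : ι → V, ∏ i, f i (w i) :=
        expect_congr rfl fun w _ => by
          rw [hkk' _ fun i hi hi' => by simp [f, hi, hi']]; simp [f, hk]
    _ = (𝔼 v, t v) * 𝔼 v, t' v := by
        rw [expect_pi_prod, hkk' _ fun i hi hi' => by simp [f, hi, hi']]; simp [f, hk]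

variable [Nonempty ι]

lemma expect_pi_expect_apply (t : V → R) : 𝔼 w : ι → V, 𝔼 i, t (w i) = 𝔼 v, t v := by
  rw [expect_comm]
  simp [expect_pi_apply]

lemma expect_pi_sq_expect_apply_sub (t : V → R) :
    𝔼 w : ι → V, (𝔼 i, t (w i) - 𝔼 v, t v) ^ 2
      = (card ι : R)⁻¹ * 𝔼 v, (t v - 𝔼 v', t v') ^ 2 := by
  set h : V → R := fun v => t v - 𝔼 v', t v'
  have hmean : 𝔼 v, h v = 0 := by simp only [h, expect_sub_distrib, expect_const, sub_self]
  have hcov (i j : ι) :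
      𝔼 w : ι → V, h (w i) * h (w j) = if i = j then 𝔼 v, h v ^ 2 else 0 := by
    split_ifs with hij
    · subst hij; simp_rw [← sq]; exact expect_pi_apply (fun v => h v ^ 2) i
    · rw [expect_pi_apply_mul_apply h h hij, hmean, zero_mul]
  calc 𝔼 w : ι → V, (𝔼 i, t (w i) - 𝔼 v, t v) ^ 2
      = 𝔼 w : ι → V, 𝔼 i, 𝔼 j, h (w i) * h (w j) := by
        refine expect_congr rfl fun w _ => ?_
        rw [← expect_mul_expect, ← sq, expect_sub_distrib, expect_const]
    _ = 𝔼 i, 𝔼 j, if i = j then 𝔼 v, h v ^ 2 else 0 := by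
        rw [expect_comm]
        simp_rw [expect_comm (s := univ (α := ι → V)), hcov]
        rfl
    _ = (card ι : R)⁻¹ * 𝔼 v, h v ^ 2 := by simp [NNRat.smul_def]

end Fintype

lemma measurable_expect {α β : Type*} [Fintype α] [MeasurableSpace β] {F : α → β → ℝ}
    (hF : ∀ u, Measurable (F u)) : Measurable fun z => 𝔼 u, F u z := by
  simp_rw [Fintype.expect_eq_sum_div_card]
  exact (Finset.measurable_sum _ fun u _ => hF u).div_const _

namespace ProbabilityTheory

lemma iIndepFun.measure_preimage_singleton_pi {Ω ι β : Type*} [MeasurableSpace Ω]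
    {P : Measure Ω} [Fintype ι] [MeasurableSpace β] [MeasurableSingletonClass β]
    {f : ι → Ω → β} (hf : iIndepFun f P) (u : ι → β) :
    P ((fun ω i => f i ω) ⁻¹' {u}) = ∏ i, P (f i ⁻¹' {u i}) := by
  have hset : (fun ω i => f i ω) ⁻¹' {u} = ⋂ i, f i ⁻¹' {u i} := by ext; simp [funext_iff]
  rw [hset, hf.meas_iInter fun i => ⟨{u i}, measurableSet_singleton _, rfl⟩]

lemma iIndepFun.measure_preimage_singleton_pi_of_uniform {Ω ι β : Type*} [MeasurableSpace Ω]
    {P : Measure Ω} [Fintype ι] [DecidableEq ι] [Fintype β] [MeasurableSpace β]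
    [MeasurableSingletonClass β] {f : ι → Ω → β} (hf : iIndepFun f P)
    (hunif : ∀ i b, P (f i ⁻¹' {b}) = (Fintype.card β : ℝ≥0∞)⁻¹) (u : ι → β) :
    P ((fun ω i => f i ω) ⁻¹' {u}) = (Fintype.card (ι → β) : ℝ≥0∞)⁻¹ := by
  simp [hf.measure_preimage_singleton_pi, hunif, ENNReal.inv_pow]

lemma identDistrib_of_measure_preimage_singleton {Ω α : Type*} [MeasurableSpace Ω]
    [MeasurableSpace α] [Countable α] [MeasurableSingletonClass α] {P : Measure Ω}
    {f g : Ω → α} (hf : Measurable f) (hg : Measurable g)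
    (h : ∀ a, P (f ⁻¹' {a}) = P (g ⁻¹' {a})) : IdentDistrib f g P P where
  aemeasurable_fst := hf.aemeasurable
  aemeasurable_snd := hg.aemeasurable
  map_eq := Measure.ext_of_singleton fun a => by
    rw [Measure.map_apply hf (measurableSet_singleton a),
      Measure.map_apply hg (measurableSet_singleton a), h]

section Independent

variable {Ω α β : Type*} [MeasurableSpace Ω] [MeasurableSpace α] [MeasurableSpace β]
  {P : Measure Ω} [IsFiniteMeasure P] {I : Ω → α} {Z : Ω → β}

lemma identDistrib_prodMk_of_indepFun {I₁ I₂ : Ω → α} (hI : IdentDistrib I₁ I₂ P P)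
    (hZ : AEMeasurable Z P) (h₁ : IndepFun I₁ Z P) (h₂ : IndepFun I₂ Z P) :
    IdentDistrib (fun ω => (I₁ ω, Z ω)) (fun ω => (I₂ ω, Z ω)) P P where
  aemeasurable_fst := hI.aemeasurable_fst.prodMk hZ
  aemeasurable_snd := hI.aemeasurable_snd.prodMk hZ
  map_eq := by
    rw [(indepFun_iff_map_prod_eq_prod_map_map hI.aemeasurable_fst hZ).mp h₁,
      (indepFun_iff_map_prod_eq_prod_map_map hI.aemeasurable_snd hZ).mp h₂, hI.map_eq]

variable [MeasurableSingletonClass α]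

lemma condExp_comp_mul_indicator_of_indepFun (hI : Measurable I) (hZ : Measurable Z)
    (hind : IndepFun I Z P) {h : β → ℝ} (hh : Measurable h) (u : α)
    (hint : Integrable (fun ω => h (Z ω) * (I ⁻¹' {u}).indicator 1 ω) P) :
    P[fun ω => h (Z ω) * (I ⁻¹' {u}).indicator 1 ω | MeasurableSpace.comap Z inferInstance]
      =ᵐ[P] fun ω => P.real (I ⁻¹' {u}) * h (Z ω) := by
  have hmeas : MeasurableSet (I ⁻¹' {u}) := hI (measurableSet_singleton u)
  have hpull := condExp_mul_of_stronglyMeasurable_left (m := MeasurableSpace.comap Z inferInstance)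
    (f := fun ω => h (Z ω)) (hh.comp (comap_measurable Z)).stronglyMeasurable hint
    ((integrable_const 1).indicator hmeas)
  have hconst := condExp_indep_eq hI.comap_le hZ.comap_le
    (stronglyMeasurable_const.indicator ⟨{u}, measurableSet_singleton u, rfl⟩)
    ((IndepFun_iff_Indep I Z P).mp hind) (μ := P) (f := (I ⁻¹' {u}).indicator (1 : Ω → ℝ))
  filter_upwards [hpull, hconst] with ω hpull hconst
  rw [show (fun ω => h (Z ω) * (I ⁻¹' {u}).indicator 1 ω)
      = (fun ω => h (Z ω)) * (I ⁻¹' {u}).indicator 1 from rfl,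
    hpull, Pi.mul_apply, hconst, integral_indicator_one hmeas, mul_comm]

lemma condExp_comp_of_indepFun [Fintype α] (hI : Measurable I) (hZ : Measurable Z)
    (hind : IndepFun I Z P) {F : α → β → ℝ} (hF : ∀ u, Measurable (F u))
    (hint : Integrable (fun ω => F (I ω) (Z ω)) P) :
    P[fun ω => F (I ω) (Z ω) | MeasurableSpace.comap Z inferInstance]
      =ᵐ[P] fun ω => ∑ u, P.real (I ⁻¹' {u}) * F u (Z ω) := by
  have hdecomp : (fun ω => F (I ω) (Z ω))
      = ∑ u, fun ω => F u (Z ω) * (I ⁻¹' {u}).indicator 1 ω := by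
    ext ω
    rw [Finset.sum_apply,
      Finset.sum_eq_single (I ω) (fun u _ hu => by simp [Ne.symm hu]) (by simp)]
    simp
  have hint_term (u : α) : Integrable (fun ω => F u (Z ω) * (I ⁻¹' {u}).indicator 1 ω) P := by
    refine hint.mono (((hF u).comp hZ).mul ((measurable_const.indicator
      (hI (measurableSet_singleton u))))).aestronglyMeasurable (.of_forall fun ω => ?_)
    by_cases hω : I ω = u <;> simp [hω]
  rw [hdecomp]
  filter_upwards [condExp_finsetSum (fun u _ => hint_term u) _,
    ae_all_iff.mpr fun u => condExp_comp_mul_indicator_of_indepFun hI hZ hind (hF u) u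
      (hint_term u)] with ω hsum hterm
  rw [hsum, Finset.sum_apply]
  exact Finset.sum_congr rfl fun u _ => hterm u

lemma condExp_comp_of_indepFun_of_uniform [Fintype α] (hI : Measurable I) (hZ : Measurable Z)
    (hind : IndepFun I Z P) (hunif : ∀ u, P (I ⁻¹' {u}) = (Fintype.card α : ℝ≥0∞)⁻¹)
    {F : α → β → ℝ} (hF : ∀ u, Measurable (F u))
    (hint : Integrable (fun ω => F (I ω) (Z ω)) P) :
    P[fun ω => F (I ω) (Z ω) | MeasurableSpace.comap Z inferInstance]
      =ᵐ[P] fun ω => 𝔼 u, F u (Z ω) := by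
  refine (condExp_comp_of_indepFun hI hZ hind hF hint).trans (.of_forall fun ω => ?_)
  simp [Measure.real, hunif, Fintype.expect_eq_sum_div_card, Finset.mul_sum, div_eq_inv_mul]

lemma condVar_comp_of_indepFun_of_uniform [Fintype α] (hI : Measurable I) (hZ : Measurable Z)
    (hind : IndepFun I Z P) (hunif : ∀ u, P (I ⁻¹' {u}) = (Fintype.card α : ℝ≥0∞)⁻¹)
    {F : α → β → ℝ} (hF : ∀ u, Measurable (F u))
    (hL2 : MemLp (fun ω => F (I ω) (Z ω)) 2 P) :
    Var[fun ω => F (I ω) (Z ω); P | MeasurableSpace.comap Z inferInstance]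
      =ᵐ[P] fun ω => 𝔼 u, (F u (Z ω) - 𝔼 u', F u' (Z ω)) ^ 2 := by
  have hmean := condExp_comp_of_indepFun_of_uniform hI hZ hind hunif hF
    (hL2.integrable one_le_two)
  have hmeanL2 : MemLp (fun ω => 𝔼 u, F u (Z ω)) 2 P :=
    (hL2.condExp (m := MeasurableSpace.comap Z inferInstance) one_le_two).ae_eq hmean
  have hsq := condExp_comp_of_indepFun_of_uniform hI hZ hind hunif
    (F := fun u z => (F u z - 𝔼 u', F u' z) ^ 2)
    (fun u => ((hF u).sub (measurable_expect hF)).pow_const 2) (hL2.sub hmeanL2).integrable_sq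
  refine (condExp_congr_ae ?_).trans hsq
  filter_upwards [hmean] with ω hω
  simp only [Pi.pow_apply, Pi.sub_apply, hω]

end Independent

lemma condVar_expect_comp_of_indepFun_of_uniform {Ω ι V β : Type*} [MeasurableSpace Ω]
    {P : Measure Ω} [IsFiniteMeasure P] [Fintype ι] [DecidableEq ι] [Fintype V] [Nonempty V]
    [MeasurableSpace V] [MeasurableSingletonClass V] [MeasurableSpace β]
    {I : Ω → ι → V} {Z : Ω → β} (hI : Measurable I) (hZ : Measurable Z) (hind : IndepFun I Z P)
    (hunif : ∀ w, P (I ⁻¹' {w}) = (Fintype.card (ι → V) : ℝ≥0∞)⁻¹)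
    {t : V → β → ℝ} (ht : ∀ v, Measurable (t v))
    (hL2 : ∀ i, MemLp (fun ω => t (I ω i) (Z ω)) 2 P) (i₀ : ι) :
    Var[fun ω => 𝔼 i, t (I ω i) (Z ω); P | MeasurableSpace.comap Z inferInstance]
      =ᵐ[P] fun ω => (Fintype.card ι : ℝ)⁻¹ *
        Var[fun ω => t (I ω i₀) (Z ω); P | MeasurableSpace.comap Z inferInstance] ω := by
  have : Nonempty ι := ⟨i₀⟩
  have hmeanL2 : MemLp (fun ω => 𝔼 i, t (I ω i) (Z ω)) 2 P := by
    simp_rw [Fintype.expect_eq_sum_div_card, div_eq_inv_mul]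
    exact (memLp_finsetSum _ fun i _ => hL2 i).const_mul _
  filter_upwards [condVar_comp_of_indepFun_of_uniform hI hZ hind hunif
      (fun w => measurable_expect fun i => ht (w i)) hmeanL2,
    condVar_comp_of_indepFun_of_uniform hI hZ hind hunif (F := fun w => t (w i₀))
      (fun w => ht (w i₀)) (hL2 i₀)] with ω hmean h₀
  rw [hmean, h₀, Fintype.expect_pi_expect_apply (fun v => t v (Z ω)),
    Fintype.expect_pi_sq_expect_apply_sub (fun v => t v (Z ω)),
    Fintype.expect_pi_apply (fun v => t v (Z ω)),
    Fintype.expect_pi_apply (fun v => (t v (Z ω) - _) ^ 2)]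

end ProbabilityTheory

/-- `g (subMean X (idx k) ω)` is by definition
`subsampleEstimate g (fun m => idx k m ω) (fun i => X i ω)`. -/
noncomputable def subsampleEstimate (g : ℝ → ℝ) {N n : ℕ} (v : Fin n → Fin N)
    (x : Fin N → ℝ) : ℝ :=
  g ((n : ℝ)⁻¹ * ∑ m, x (v m))

lemma measurable_subsampleEstimate {g : ℝ → ℝ} (hg : Measurable g) {N n : ℕ} :
    Measurable fun p : (Fin n → Fin N) × (Fin N → ℝ) => subsampleEstimate g p.1 p.2 :=
  measurable_from_prod_countable_right fun v =>
    hg.comp (measurable_const.mul (Finset.measurable_sum _ fun m _ => measurable_pi_apply (v m)))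

section Subsampling

variable {Ω : Type*} [MeasurableSpace Ω] {P : Measure Ω} {N n K : ℕ}
  {X : Fin N → Ω → ℝ} {idx : Fin K → Fin n → Ω → Fin N}

lemma measure_preimage_indexArray_singleton
    (hidxindep : iIndepFun (fun p : Fin K × Fin n => idx p.1 p.2) P)
    (hunif : ∀ k m j, P (idx k m ⁻¹' {j}) = (Fintype.card (Fin N) : ℝ≥0∞)⁻¹)
    (w : Fin K → Fin n → Fin N) :
    P ((fun ω k m => idx k m ω) ⁻¹' {w}) = (Fintype.card (Fin K → Fin n → Fin N) : ℝ≥0∞)⁻¹ := by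
  rw [← Fintype.card_congr (Equiv.curry _ _ _),
    ← hidxindep.measure_preimage_singleton_pi_of_uniform (fun p => hunif p.1 p.2)
      (Function.uncurry w)]
  congr 1
  ext ω
  simp [funext_iff]

lemma identDistrib_subsampleEstimate [IsFiniteMeasure P] (hXmeas : ∀ i, Measurable (X i))
    (hidxmeas : ∀ k m, Measurable (idx k m))
    (hidxindep : iIndepFun (fun p : Fin K × Fin n => idx p.1 p.2) P)
    (hidxX : IndepFun (fun ω (p : Fin K × Fin n) => idx p.1 p.2 ω) (fun ω i => X i ω) P)
    (hunif : ∀ k m j, P (idx k m ⁻¹' {j}) = (Fintype.card (Fin N) : ℝ≥0∞)⁻¹)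
    {g : ℝ → ℝ} (hg : Measurable g) (k k' : Fin K) :
    IdentDistrib (fun ω => subsampleEstimate g (fun m => idx k m ω) (fun i => X i ω))
      (fun ω => subsampleEstimate g (fun m => idx k' m ω) (fun i => X i ω)) P P := by
  have hrow (k : Fin K) (v : Fin n → Fin N) :
      P ((fun ω m => idx k m ω) ⁻¹' {v}) = (Fintype.card (Fin n → Fin N) : ℝ≥0∞)⁻¹ :=
    (hidxindep.precomp (Prod.mk_right_injective k)).measure_preimage_singleton_pi_of_uniform
      (fun m => hunif k m) v
  have hind (k : Fin K) : IndepFun (fun ω m => idx k m ω) (fun ω i => X i ω) P :=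
    hidxX.comp (φ := fun u m => u (k, m)) (ψ := id)
      (measurable_pi_lambda _ fun m => measurable_pi_apply (k, m)) measurable_id
  have hlaw : IdentDistrib (fun ω m => idx k m ω) (fun ω m => idx k' m ω) P P :=
    identDistrib_of_measure_preimage_singleton (measurable_pi_lambda _ (hidxmeas k))
      (measurable_pi_lambda _ (hidxmeas k')) fun v => by rw [hrow, hrow]
  exact (identDistrib_prodMk_of_indepFun hlaw (measurable_pi_lambda _ hXmeas).aemeasurable
    (hind k) (hind k')).comp (measurable_subsampleEstimate hg)

end Subsampling

theorem sos_bias_and_conditional_variance_general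
    {Ω : Type*} [MeasurableSpace Ω] (P : Measure Ω) [IsProbabilityMeasure P]
    {N n K : ℕ} (hN : 0 < N) (hK : 0 < K)
    (X : Fin N → Ω → ℝ) (idx : Fin K → Fin n → Ω → Fin N)
    -- the Xᵢ are i.i.d. real random variables
    (hXmeas : ∀ i, Measurable (X i))
    -- the sampling indices are measurable, mutually independent,
    -- independent of (X₁, …, X_N), and uniformly distributed on {1, …, N}
    (hidxmeas : ∀ k m, Measurable (idx k m))
    (hidxindep : iIndepFun
      (fun p : Fin K × Fin n => idx p.1 p.2) P)
    (hidxX : IndepFun (fun ω (p : Fin K × Fin n) => idx p.1 p.2 ω)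
      (fun ω (i : Fin N) => X i ω) P)
    (hunif : ∀ k m (j : Fin N), P (idx k m ⁻¹' {j}) = (N : ℝ≥0∞)⁻¹)
    (g : ℝ → ℝ) (hg : Measurable g)
    (hL2 : MemLp (fun ω => g (subMean X (idx ⟨0, hK⟩) ω)) 2 P) :
    (∫ ω, (K : ℝ)⁻¹ * ∑ k, g (subMean X (idx k) ω) ∂P
        = ∫ ω, g (subMean X (idx ⟨0, hK⟩) ω) ∂P) ∧
    P[(fun ω =>
          ((K : ℝ)⁻¹ * ∑ k, g (subMean X (idx k) ω) -
              (P[(fun ω' => (K : ℝ)⁻¹ * ∑ k, g (subMean X (idx k) ω')) |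
                  MeasurableSpace.comap (fun ω' (i : Fin N) => X i ω') inferInstance]) ω) ^ 2) |
        MeasurableSpace.comap (fun ω (i : Fin N) => X i ω) inferInstance]
      =ᵐ[P] fun ω => (K : ℝ)⁻¹ *
        (P[(fun ω' =>
              (g (subMean X (idx ⟨0, hK⟩) ω') -
                  (P[(fun ω'' => g (subMean X (idx ⟨0, hK⟩) ω'')) |
                      MeasurableSpace.comap (fun ω'' (i : Fin N) => X i ω'') inferInstance]) ω') ^ 2) |
            MeasurableSpace.comap (fun ω (i : Fin N) => X i ω) inferInstance]) ω := by
  set Z : Ω → Fin N → ℝ := fun ω i => X i ω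
  set I : Ω → Fin K → Fin n → Fin N := fun ω k m => idx k m ω
  have : NeZero N := ⟨hN.ne'⟩
  have hunif' (k m) (j : Fin N) : P (idx k m ⁻¹' {j}) = (Fintype.card (Fin N) : ℝ≥0∞)⁻¹ := by
    rw [hunif, Fintype.card_fin]
  have hIZ : IndepFun I Z P := hidxX.comp (φ := Function.curry) (ψ := id)
    (measurable_pi_lambda _ fun k => measurable_pi_lambda _ fun m => measurable_pi_apply (k, m))
    measurable_id
  have hθ (k : Fin K) : IdentDistrib (fun ω => g (subMean X (idx k) ω))
      (fun ω => g (subMean X (idx ⟨0, hK⟩) ω)) P P :=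
    identDistrib_subsampleEstimate hXmeas hidxmeas hidxindep hidxX hunif' hg k ⟨0, hK⟩
  refine ⟨?_, ?_⟩
  · rw [integral_const_mul, integral_finsetSum _ fun k _ =>
      (hθ k).integrable_iff.mpr (hL2.integrable one_le_two)]
    simp [(hθ _).integral_eq, hK.ne']
  · have hmean : (fun ω => (K : ℝ)⁻¹ * ∑ k, g (subMean X (idx k) ω))
        = fun ω => 𝔼 k, subsampleEstimate g (I ω k) (Z ω) := by
      ext ω
      rw [Fintype.expect_eq_sum_div_card, Fintype.card_fin, inv_mul_eq_div]
      rfl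
    change Var[fun ω => (K : ℝ)⁻¹ * ∑ k, g (subMean X (idx k) ω); P | _]
      =ᵐ[P] fun ω => (K : ℝ)⁻¹ * Var[fun ω => subsampleEstimate g (I ω ⟨0, hK⟩) (Z ω); P | _] ω
    rw [hmean]
    simpa using condVar_expect_comp_of_indepFun_of_uniform
      (measurable_pi_lambda _ fun k => measurable_pi_lambda _ (hidxmeas k))
      (measurable_pi_lambda _ hXmeas) hIZ (measure_preimage_indexArray_singleton hidxindep hunif')
      (t := subsampleEstimate g)
      (fun _ => (measurable_subsampleEstimate hg).comp measurable_prodMk_left)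
      (fun k => (hθ k).memLp_iff.mpr hL2) ⟨0, hK⟩

/-- the bias of the subsample one-shot estimator does not improve with the
number of subsamples while its conditional variance does: if `g` is measurable and
`g(μ̂⁽¹⁾)` is square integrable, then `E(θ̂_SOS) = E(θ̂⁽¹⁾)` and
`Var(θ̂_SOS | X₁, …, X_N) = K⁻¹ Var(θ̂⁽¹⁾ | X₁, …, X_N)` almost surely. -/
theorem sos_bias_and_conditional_variance
    {Ω : Type*} [MeasurableSpace Ω] (P : Measure Ω) [IsProbabilityMeasure P]
    {N n K : ℕ} (hN : 0 < N) (hn : 2 ≤ n) (hK : 0 < K)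
    (X : Fin N → Ω → ℝ) (idx : Fin K → Fin n → Ω → Fin N)
    -- the Xᵢ are i.i.d. real random variables
    (hXmeas : ∀ i, Measurable (X i))
    (hXindep : iIndepFun X P)
    (hXident : ∀ i j, IdentDistrib (X i) (X j) P P)
    -- the sampling indices are measurable, mutually independent,
    -- independent of (X₁, …, X_N), and uniformly distributed on {1, …, N}
    (hidxmeas : ∀ k m, Measurable (idx k m))
    (hidxindep : iIndepFun
      (fun p : Fin K × Fin n => idx p.1 p.2) P)
    (hidxX : IndepFun (fun ω (p : Fin K × Fin n) => idx p.1 p.2 ω)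
      (fun ω (i : Fin N) => X i ω) P)
    (hunif : ∀ k m (j : Fin N), P (idx k m ⁻¹' {j}) = (N : ℝ≥0∞)⁻¹)
    (g : ℝ → ℝ) (hg : Measurable g)
    (hL2 : MemLp (fun ω => g (subMean X (idx ⟨0, hK⟩) ω)) 2 P) :
    (∫ ω, (K : ℝ)⁻¹ * ∑ k, g (subMean X (idx k) ω) ∂P
        = ∫ ω, g (subMean X (idx ⟨0, hK⟩) ω) ∂P) ∧
    P[(fun ω =>
          ((K : ℝ)⁻¹ * ∑ k, g (subMean X (idx k) ω) -
              (P[(fun ω' => (K : ℝ)⁻¹ * ∑ k, g (subMean X (idx k) ω')) |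
                  MeasurableSpace.comap (fun ω' (i : Fin N) => X i ω') inferInstance]) ω) ^ 2) |
        MeasurableSpace.comap (fun ω (i : Fin N) => X i ω) inferInstance]
      =ᵐ[P] fun ω => (K : ℝ)⁻¹ *
        (P[(fun ω' =>
              (g (subMean X (idx ⟨0, hK⟩) ω') -
                  (P[(fun ω'' => g (subMean X (idx ⟨0, hK⟩) ω'')) |
                      MeasurableSpace.comap (fun ω'' (i : Fin N) => X i ω'') inferInstance]) ω') ^ 2) |
            MeasurableSpace.comap (fun ω (i : Fin N) => X i ω) inferInstance]) ω :=
  sos_bias_and_conditional_variance_general P hN hK X idx hXmeas hidxmeas hidxindep hidxX hunif g hg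
    hL2
end
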